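/- Let y¹, y², y³ ∈ ℝⁿ and p ∈ ℝ³, x̃¹, x̃², x̃³ ∈ ℝ³ with ‖x̃ⁱ − x̃ʲ‖ ≥ ‖yⁱ − yʲ‖ for all i, j. Then there exists q ∈ ℝⁿ with ‖q − yⁱ‖ ≤ ‖p − x̃ⁱ‖ for all i. -/

import Mathlib

/-!
For weights `l` in the standard simplex let `b l = ∑ j, l j • y j` and
`H l = ∑ i, l i * (‖b l - y i‖ ^ 2 - r i ^ 2)` (`kirszbraunPotential`), where `r i = ‖p - x i‖`.
The variance identity `∑ i, l i * ‖b l - y i‖ ^ 2 = ½ ∑ i j, l i * l j * ‖y i - y j‖ ^ 2`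
transfers the distance hypothesis to
`∑ i, l i * ‖b l - y i‖ ^ 2 ≤ ∑ i, l i * ‖b' l - x i‖ ^ 2 ≤ ∑ i, l i * r i ^ 2`
(`b'` the barycenter of the `x i`), so `H ≤ 0` on the simplex. At a maximiser `l` of `H`,
shifting weight towards a vertex `i` shows `‖b l - y i‖ ^ 2 - r i ^ 2 ≤ H l ≤ 0`, so `q = b l`
works.
-/

open Set Metric

open Filter Topology RealInnerProductSpace

section Kirszbraun

variable {ι E : Type*} [Fintype ι] [NormedAddCommGroup E] [InnerProductSpace ℝ E]

theorem sum_mul_norm_sub_sq_eq_add (l : ι → ℝ) (hl : ∑ i, l i = 1) (y : ι → E) (z : E) :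
    ∑ i, l i * ‖z - y i‖ ^ 2
      = ‖z - ∑ j, l j • y j‖ ^ 2 + ∑ i, l i * ‖∑ j, l j • y j - y i‖ ^ 2 := by
  set b := ∑ j, l j • y j
  have hcentered : ∑ i, l i • (b - y i) = 0 := by
    simp only [smul_sub, Finset.sum_sub_distrib, ← Finset.sum_smul, hl, one_smul, b, sub_self]
  have hexpand : ∀ i, l i * ‖z - y i‖ ^ 2
      = l i * ‖z - b‖ ^ 2 + 2 * ⟪z - b, l i • (b - y i)⟫ + l i * ‖b - y i‖ ^ 2 := by
    intro i
    rw [show z - y i = (z - b) + (b - y i) by abel, norm_add_sq_real, real_inner_smul_right]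
    ring
  simp only [hexpand, Finset.sum_add_distrib, ← Finset.sum_mul, ← Finset.mul_sum, ← inner_sum,
    hcentered, hl, inner_zero_right]
  ring

theorem sum_sum_mul_norm_sub_sq_eq (l : ι → ℝ) (hl : ∑ i, l i = 1) (y : ι → E) :
    ∑ i, ∑ j, l i * l j * ‖y i - y j‖ ^ 2
      = 2 * ∑ i, l i * ‖∑ j, l j • y j - y i‖ ^ 2 := by
  have hrow : ∀ i, ∑ j, l i * l j * ‖y i - y j‖ ^ 2
      = l i * ‖∑ j, l j • y j - y i‖ ^ 2 + l i * ∑ k, l k * ‖∑ j, l j • y j - y k‖ ^ 2 := by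
    intro i
    simp only [mul_assoc, ← Finset.mul_sum]
    rw [sum_mul_norm_sub_sq_eq_add l hl y (y i), norm_sub_rev, mul_add]
  simp only [hrow, Finset.sum_add_distrib, ← Finset.sum_mul, hl]
  ring

theorem sum_mul_norm_sub_sq_le_of_dist_le {F : Type*} [NormedAddCommGroup F]
    [InnerProductSpace ℝ F] {l : ι → ℝ} (hl : l ∈ stdSimplex ℝ ι) {y : ι → E} {x : ι → F}
    (h : ∀ i j, dist (y i) (y j) ≤ dist (x i) (x j)) :
    ∑ i, l i * ‖∑ j, l j • y j - y i‖ ^ 2 ≤ ∑ i, l i * ‖∑ j, l j • x j - x i‖ ^ 2 := by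
  have hpair : ∑ i, ∑ j, l i * l j * ‖y i - y j‖ ^ 2 ≤ ∑ i, ∑ j, l i * l j * ‖x i - x j‖ ^ 2 := by
    gcongr with i _ j _
    · exact mul_nonneg (hl.1 i) (hl.1 j)
    · simpa only [dist_eq_norm] using h i j
  rw [sum_sum_mul_norm_sub_sq_eq l hl.2, sum_sum_mul_norm_sub_sq_eq l hl.2] at hpair
  linarith

def kirszbraunPotential (y : ι → E) (r : ι → ℝ) (l : ι → ℝ) : ℝ :=
  ∑ i, l i * (‖∑ j, l j • y j - y i‖ ^ 2 - r i ^ 2)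

theorem kirszbraunPotential_nonpos {F : Type*} [NormedAddCommGroup F] [InnerProductSpace ℝ F]
    {l : ι → ℝ} (hl : l ∈ stdSimplex ℝ ι) {y : ι → E} {x : ι → F}
    (h : ∀ i j, dist (y i) (y j) ≤ dist (x i) (x j)) (p : F) :
    kirszbraunPotential y (fun i => dist p (x i)) l ≤ 0 := by
  have hx := sum_mul_norm_sub_sq_eq_add l hl.2 x p
  have hy := sum_mul_norm_sub_sq_le_of_dist_le hl h
  simp only [kirszbraunPotential, mul_sub, Finset.sum_sub_distrib, dist_eq_norm]
  nlinarith [sq_nonneg ‖p - ∑ j, l j • x j‖]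

theorem continuous_kirszbraunPotential (y : ι → E) (r : ι → ℝ) :
    Continuous (kirszbraunPotential y r) := by
  unfold kirszbraunPotential
  fun_prop

theorem kirszbraunPotential_smul_add_smul_single [DecidableEq ι] (y : ι → E) (r : ι → ℝ)
    {l : ι → ℝ} (hl : ∑ i, l i = 1) (i : ι) (t : ℝ) :
    kirszbraunPotential y r ((1 - t) • l + t • Pi.single i 1)
      = (1 - t) * kirszbraunPotential y r l
        + t * (‖∑ j, l j • y j - y i‖ ^ 2 - r i ^ 2) - t ^ 2 * ‖∑ j, l j • y j - y i‖ ^ 2 := by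
  set m : ι → ℝ := (1 - t) • l + t • Pi.single i 1
  set b := ∑ j, l j • y j
  have hmix : ∀ f : ι → ℝ, ∑ j, m j * f j = (1 - t) * ∑ j, l j * f j + t * f i := by
    intro f
    simp [m, add_mul, mul_assoc, Finset.sum_add_distrib, ← Finset.mul_sum, Pi.single_apply]
  have hm : ∑ j, m j = 1 := by simpa [hl] using hmix fun _ => 1
  have hbm : ∑ j, m j • y j = b + t • (y i - b) := by
    simp only [m, Pi.add_apply, Pi.smul_apply, smul_eq_mul, add_smul, mul_smul,
      Finset.sum_add_distrib, ← Finset.smul_sum, Pi.single_apply, ite_smul, one_smul, zero_smul,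
      Finset.sum_ite_eq', Finset.mem_univ, if_true, b]
    module
  have hshift := sum_mul_norm_sub_sq_eq_add m hm y b
  rw [hbm, show b - (b + t • (y i - b)) = -(t • (y i - b)) by abel, norm_neg, norm_smul,
    Real.norm_eq_abs, mul_pow, sq_abs, norm_sub_rev, hmix] at hshift
  have hr := hmix fun j => r j ^ 2
  simp only [kirszbraunPotential, hbm, mul_sub, Finset.sum_sub_distrib]
  linarith

theorem le_kirszbraunPotential_of_isMaxOn {y : ι → E} {r l : ι → ℝ} (hl : l ∈ stdSimplex ℝ ι)
    (hmax : IsMaxOn (kirszbraunPotential y r) (stdSimplex ℝ ι) l) (i : ι) :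
    ‖∑ j, l j • y j - y i‖ ^ 2 - r i ^ 2 ≤ kirszbraunPotential y r l := by
  classical
  set a := ‖∑ j, l j • y j - y i‖ ^ 2 - r i ^ 2
  set c := ‖∑ j, l j • y j - y i‖ ^ 2
  -- to first order in `t`, shifting weight `t` to vertex `i` raises the potential by `t * (a - H l)`
  have hsmall : ∀ t ∈ Ioc (0 : ℝ) 1, a - kirszbraunPotential y r l ≤ t * c := by
    rintro t ⟨ht0, ht1⟩
    have hmem : (1 - t) • l + t • Pi.single i 1 ∈ stdSimplex ℝ ι :=
      convex_stdSimplex ℝ ι hl (single_mem_stdSimplex ℝ i) (by linarith) ht0.le (by ring)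
    have hle : kirszbraunPotential y r ((1 - t) • l + t • Pi.single i 1)
        ≤ kirszbraunPotential y r l := hmax hmem
    rw [kirszbraunPotential_smul_add_smul_single y r hl.2] at hle
    exact le_of_mul_le_mul_left (by linarith) ht0
  have hlim : Tendsto (fun t : ℝ => t * c) (𝓝[>] 0) (𝓝 0) := by
    simpa using ((tendsto_id (x := 𝓝 (0 : ℝ))).mono_left nhdsWithin_le_nhds).mul_const c
  exact sub_nonpos.mp (ge_of_tendsto hlim (eventually_of_mem (Ioc_mem_nhdsGT one_pos) hsmall))

theorem exists_forall_dist_le_of_dist_le [Nonempty ι] {F : Type*} [NormedAddCommGroup F]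
    [InnerProductSpace ℝ F] (y : ι → E) (x : ι → F) (p : F)
    (h : ∀ i j, dist (y i) (y j) ≤ dist (x i) (x j)) :
    ∃ q : E, ∀ i, dist q (y i) ≤ dist p (x i) := by
  classical
  obtain ⟨l, hl, hmax⟩ := (isCompact_stdSimplex ℝ ι).exists_isMaxOn
    ⟨_, single_mem_stdSimplex ℝ (Classical.arbitrary ι)⟩
    (continuous_kirszbraunPotential y fun i => dist p (x i)).continuousOn
  refine ⟨∑ j, l j • y j, fun i => ?_⟩
  have hi := le_kirszbraunPotential_of_isMaxOn hl hmax i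
  have hnonpos := kirszbraunPotential_nonpos hl h p
  rw [dist_eq_norm, ← pow_le_pow_iff_left₀ (norm_nonneg _) dist_nonneg two_ne_zero]
  linarith

end Kirszbraun

theorem finite_plus_one_euclidean (n : ℕ)
    (y : Fin 3 → EuclideanSpace ℝ (Fin n))
    (p : EuclideanSpace ℝ (Fin 3)) (xt : Fin 3 → EuclideanSpace ℝ (Fin 3))
    (h : ∀ i j, dist (y i) (y j) ≤ dist (xt i) (xt j)) :
    ∃ q : EuclideanSpace ℝ (Fin n), ∀ i, dist q (y i) ≤ dist p (xt i) :=
  exists_forall_dist_le_of_dist_le y xt p h
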